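/- For every formula φ0 of L_DSTIT: if φ0 is satisfiable in BT+AC structures, then the translation tr(φ0) = p_{φ0} ∧ ⋀_{ψ ∈ sf(φ0)} □B_ψ, a formula of L_CSTIT, is satisfiable in BT+AC structures. -/

import Mathlib

/-! Common infrastructure for STIT logic (Chellas STIT, deliberative STIT,
historic necessity), following Balbiani, Herzig & Troquard,
"Alternative axiomatics and complexity of deliberative STIT theories". -/

namespace STIT

/-- Formulas of the (combined) STIT language, over a countable set of atoms
(indexed by `ℕ`) and agents indexed by `ℕ` (the actual agent set `Agt` is an
initial segment of `ℕ`).  `cstit i` is the Chellas STIT operator `[i]`,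
`dstit i` is the deliberative STIT operator `[i dstit: ·]`, and `box` is the
historic necessity operator `□`. -/
inductive Fml : Type
  | atm : ℕ → Fml
  | neg : Fml → Fml
  | and : Fml → Fml → Fml
  | cstit : ℕ → Fml → Fml
  | dstit : ℕ → Fml → Fml
  | box : Fml → Fml
  deriving DecidableEq

/-- Material implication `φ → ψ`, as the abbreviation `¬(φ ∧ ¬ψ)`. -/
def impF (φ ψ : Fml) : Fml := .neg (.and φ (.neg ψ))

/-- Disjunction `φ ∨ ψ`, as the abbreviation `¬(¬φ ∧ ¬ψ)`. -/
def orF (φ ψ : Fml) : Fml := .neg (.and (.neg φ) (.neg ψ))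

/-- Biimplication `φ ↔ ψ`, as the abbreviation `(φ → ψ) ∧ (ψ → φ)`. -/
def iffF (φ ψ : Fml) : Fml := .and (impF φ ψ) (impF ψ φ)

/-- `◇φ`, abbreviating `¬□¬φ`. -/
def diaF (φ : Fml) : Fml := .neg (.box (.neg φ))

/-- `⟨i⟩φ`, abbreviating `¬[i]¬φ`. -/
def posF (i : ℕ) (φ : Fml) : Fml := .neg (.cstit i (.neg φ))

/-- Conjunction of a (finite) list of formulas; the empty conjunction is a
tautology `⊤`. -/
def conjF : List Fml → Fml
  | [] => impF (.atm 0) (.atm 0)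
  | [φ] => φ
  | φ :: l => .and φ (conjF l)

/-- The length `‖φ‖` of a formula. -/
def len : Fml → ℕ
  | .atm _ => 1
  | .neg φ => 1 + len φ
  | .and φ ψ => 3 + len φ + len ψ
  | .cstit _ φ => 3 + len φ
  | .dstit _ φ => 5 + len φ
  | .box φ => 1 + len φ

/-- The set `sf φ` of subformulas of `φ`. -/
def sf : Fml → Finset Fml
  | .atm p => {.atm p}
  | .neg φ => insert (.neg φ) (sf φ)
  | .and φ ψ => insert (.and φ ψ) (sf φ ∪ sf ψ)
  | .cstit i φ => insert (.cstit i φ) (sf φ)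
  | .dstit i φ => insert (.dstit i φ) (sf φ)
  | .box φ => insert (.box φ) (sf φ)

/-- The set of atoms occurring in a formula. -/
def atoms : Fml → Finset ℕ
  | .atm p => {p}
  | .neg φ => atoms φ
  | .and φ ψ => atoms φ ∪ atoms ψ
  | .cstit _ φ => atoms φ
  | .dstit _ φ => atoms φ
  | .box φ => atoms φ

/-- `φ` contains no deliberative STIT operator (so `φ` belongs to `L_CSTIT`
when it moreover only uses box/cstit). -/
def NoDstit : Fml → Prop
  | .atm _ => True
  | .neg φ => NoDstit φ
  | .and φ ψ => NoDstit φ ∧ NoDstit ψ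
  | .cstit _ φ => NoDstit φ
  | .dstit _ _ => False
  | .box φ => NoDstit φ

/-- `φ` contains no Chellas STIT operator (so `φ` belongs to `L_DSTIT`). -/
def NoCstit : Fml → Prop
  | .atm _ => True
  | .neg φ => NoCstit φ
  | .and φ ψ => NoCstit φ ∧ NoCstit ψ
  | .cstit _ _ => False
  | .dstit _ φ => NoCstit φ
  | .box φ => NoCstit φ

/-- `φ` contains no historic necessity operator. -/
def NoBox : Fml → Prop
  | .atm _ => True
  | .neg φ => NoBox φ
  | .and φ ψ => NoBox φ ∧ NoBox ψ
  | .cstit _ φ => NoBox φ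
  | .dstit _ φ => NoBox φ
  | .box _ => False

/-- All agents occurring in `φ` belong to `A`. -/
def AgentsIn (A : Set ℕ) : Fml → Prop
  | .atm _ => True
  | .neg φ => AgentsIn A φ
  | .and φ ψ => AgentsIn A φ ∧ AgentsIn A ψ
  | .cstit i φ => i ∈ A ∧ AgentsIn A φ
  | .dstit i φ => i ∈ A ∧ AgentsIn A φ
  | .box φ => AgentsIn A φ

/-- `A` is an initial segment `{0, 1, …}` of `ℕ`. -/
def InitSeg (A : Set ℕ) : Prop := ∀ i ∈ A, ∀ j : ℕ, j ≤ i → j ∈ A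

/-- A BT+AC model over the agent set `Agt`: a nonempty tree-like strict
order of moments, together with a choice function and a valuation.
Histories are represented as maximal chains (maximal linearly `<`-ordered
subsets) of moments; `Choice i w` is, for each agent `i ∈ Agt`, a partition
of the set `H_w` of histories passing through `w` into nonempty cells,
satisfying the superadditivity constraint (independence of agents). -/
structure BTAC (Agt : Set ℕ) where
  W : Type
  neW : Nonempty W
  lt : W → W → Prop
  lt_irrefl : ∀ w : W, ¬ lt w w
  lt_trans : ∀ {a b c : W}, lt a b → lt b c → lt a c
  treelike : ∀ w₁ w₂ w₃ : W, lt w₁ w₃ → lt w₂ w₃ → w₁ = w₂ ∨ lt w₁ w₂ ∨ lt w₂ w₁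
  Choice : ℕ → W → Set (Set (Set W))
  V : ℕ → W → Set W → Prop
  choice_hist : ∀ i ∈ Agt, ∀ w : W, ∀ Q ∈ Choice i w, ∀ h ∈ Q,
      IsMaxChain lt h ∧ w ∈ h
  choice_cell_nonempty : ∀ i ∈ Agt, ∀ w : W, ∀ Q ∈ Choice i w, Q.Nonempty
  choice_nonempty : ∀ i ∈ Agt, ∀ w : W, (Choice i w).Nonempty
  choice_cover : ∀ i ∈ Agt, ∀ w : W, ∀ h : Set W,
      IsMaxChain lt h → w ∈ h → ∃ Q ∈ Choice i w, h ∈ Q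
  choice_disjoint : ∀ i ∈ Agt, ∀ w : W, ∀ Q ∈ Choice i w, ∀ Q' ∈ Choice i w,
      (Q ∩ Q').Nonempty → Q = Q'
  superadd : ∀ w : W, ∀ s : ℕ → Set (Set W),
      (∀ i ∈ Agt, s i ∈ Choice i w) → (⋂ i ∈ Agt, s i).Nonempty

/-- Truth of a formula at an index `w/h` of a BT+AC model.  (`[i]φ` holds at
`w/h` iff `φ` holds at `w/h'` for every history `h'` in the cell of
`Choice i w` containing `h`; `□φ` holds at `w/h` iff `φ` holds at `w/h'` for
every history `h'` through `w`; `[i dstit: φ]` additionally requires a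
witness history through `w` where `φ` fails.) -/
def truth {Agt : Set ℕ} (M : BTAC Agt) : Fml → M.W → Set M.W → Prop
  | .atm p, w, h => M.V p w h
  | .neg φ, w, h => ¬ truth M φ w h
  | .and φ ψ, w, h => truth M φ w h ∧ truth M ψ w h
  | .cstit i φ, w, h =>
      ∀ h' : Set M.W, (∃ Q ∈ M.Choice i w, h ∈ Q ∧ h' ∈ Q) → truth M φ w h'
  | .dstit i φ, w, h =>
      (∀ h' : Set M.W, (∃ Q ∈ M.Choice i w, h ∈ Q ∧ h' ∈ Q) → truth M φ w h') ∧
      (∃ h'' : Set M.W, IsMaxChain M.lt h'' ∧ w ∈ h'' ∧ ¬ truth M φ w h'')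
  | .box φ, w, h =>
      ∀ h' : Set M.W, IsMaxChain M.lt h' → w ∈ h' → truth M φ w h'

/-- Validity in BT+AC structures over the agent set `Agt`: truth at every
index `w/h` (with `h` a history and `w ∈ h`) of every BT+AC model. -/
def validBTAC (Agt : Set ℕ) (φ : Fml) : Prop :=
  ∀ M : BTAC Agt, ∀ w : M.W, ∀ h : Set M.W,
    IsMaxChain M.lt h → w ∈ h → truth M φ w h

/-- Satisfiability in BT+AC structures over the agent set `Agt`. -/
def satBTAC (Agt : Set ℕ) (φ : Fml) : Prop :=
  ∃ M : BTAC Agt, ∃ w : M.W, ∃ h : Set M.W,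
    IsMaxChain M.lt h ∧ w ∈ h ∧ truth M φ w h

/-- A Kripke model over the agent set `Agt`: a nonempty set of worlds, an
equivalence relation `R i` for each agent `i ∈ Agt`, and a valuation. -/
structure KModel (Agt : Set ℕ) where
  W : Type
  neW : Nonempty W
  R : ℕ → W → W → Prop
  equiv : ∀ i ∈ Agt, Equivalence (R i)
  V : ℕ → Set W

/-- The general permutation property: for all worlds `w, v` and agents
`l, m, n ∈ Agt`, if `⟨w,v⟩ ∈ R_l ∘ R_m` then there is `u` with `⟨w,u⟩ ∈ R_n`
and `⟨u,v⟩ ∈ R_i` for every agent `i ≠ n`. -/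
def GenPerm {Agt : Set ℕ} (M : KModel Agt) : Prop :=
  ∀ w v : M.W, ∀ l ∈ Agt, ∀ m ∈ Agt, ∀ n ∈ Agt,
    Relation.Comp (M.R l) (M.R m) w v →
    ∃ u : M.W, M.R n w u ∧ ∀ i ∈ Agt, i ≠ n → M.R i u v

/-- Truth in a Kripke model: `[i]` is interpreted by `R i`, and `□` by the
composition `R 1 ∘ R 0` (so that `Def(□)` holds). -/
def ktruth {Agt : Set ℕ} (M : KModel Agt) : Fml → M.W → Prop
  | .atm p, w => w ∈ M.V p
  | .neg φ, w => ¬ ktruth M φ w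
  | .and φ ψ, w => ktruth M φ w ∧ ktruth M ψ w
  | .cstit i φ, w => ∀ u : M.W, M.R i w u → ktruth M φ u
  | .dstit i φ, w =>
      (∀ u : M.W, M.R i w u → ktruth M φ u) ∧
      (∃ u : M.W, Relation.Comp (M.R 1) (M.R 0) w u ∧ ¬ ktruth M φ u)
  | .box φ, w => ∀ u : M.W, Relation.Comp (M.R 1) (M.R 0) w u → ktruth M φ u

/-- Validity in all Kripke models over `Agt` (with equivalence relations)
satisfying the general permutation property. -/
def validK (Agt : Set ℕ) (φ : Fml) : Prop :=
  ∀ M : KModel Agt, GenPerm M → ∀ w : M.W, ktruth M φ w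

/-- Satisfiability in some Kripke model over `Agt` (with equivalence
relations) satisfying the general permutation property. -/
def satK (Agt : Set ℕ) (φ : Fml) : Prop :=
  ∃ M : KModel Agt, GenPerm M ∧ ∃ w : M.W, ktruth M φ w

/-- `φ` is (a substitution instance of) a propositional tautology: it is true
under every assignment of truth values to formulas that respects `¬` and `∧`. -/
def Taut (φ : Fml) : Prop :=
  ∀ v : Fml → Prop,
    (∀ ψ : Fml, v (.neg ψ) ↔ ¬ v ψ) →
    (∀ ψ χ : Fml, v (.and ψ χ) ↔ (v ψ ∧ v χ)) →
    v φ

/-- The S5 axiom schemas (K, T and 5) for a box-like operator `op`. -/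
def s5Set (op : Fml → Fml) : Set Fml :=
  {χ | (∃ φ ψ : Fml, χ = impF (op (impF φ ψ)) (impF (op φ) (op ψ))) ∨
       (∃ φ : Fml, χ = impF (op φ) φ) ∨
       (∃ φ : Fml, χ = impF (.neg (op (.neg φ))) (op (.neg (op (.neg φ)))))}

/-- The schemas `(Incl_i) : □φ → [i]φ` for each agent `i ∈ Agt`. -/
def inclSet (Agt : Set ℕ) : Set Fml :=
  {χ | ∃ i ∈ Agt, ∃ φ : Fml, χ = impF (.box φ) (.cstit i φ)}

/-- The formula `(AAIA_k) : ◇φ → ⟨k⟩⋀_{0 ≤ i < k}⟨i⟩φ`. -/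
def aaiaFml (k : ℕ) (φ : Fml) : Fml :=
  impF (diaF φ) (posF k (conjF ((List.range k).map (fun i => posF i φ))))

/-- The alternative independence schemas `(AAIA_k)` for all `k ≥ 1` with
agents `0, …, k ∈ Agt`. -/
def aaiaSet (Agt : Set ℕ) : Set Fml :=
  {χ | ∃ k : ℕ, 1 ≤ k ∧ (∀ i ≤ k, i ∈ Agt) ∧ ∃ φ : Fml, χ = aaiaFml k φ}

/-- The formula `(AIA_k) : (◇[0]φ₀ ∧ … ∧ ◇[k]φₖ) → ◇([0]φ₀ ∧ … ∧ [k]φₖ)`. -/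
def aiaFml (k : ℕ) (φs : ℕ → Fml) : Fml :=
  impF (conjF ((List.range (k+1)).map (fun i => diaF (.cstit i (φs i)))))
       (diaF (conjF ((List.range (k+1)).map (fun i => .cstit i (φs i)))))

/-- The formula `(GPerm_k) : ⟨l⟩⟨m⟩φ → ⟨n⟩⋀_{i ≤ k, i ≠ n}⟨i⟩φ`. -/
def gpermFml (k l m n : ℕ) (φ : Fml) : Fml :=
  impF (posF l (posF m φ))
       (posF n (conjF (((List.range (k+1)).filter (fun i => i != n)).map
          (fun i => posF i φ))))

/-- The general permutation schemas `(GPerm_k)` for all `k ≥ 0` (with agents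
`0, …, k ∈ Agt`) and agents `l, m, n ∈ Agt`. -/
def gpermSet (Agt : Set ℕ) : Set Fml :=
  {χ | ∃ k : ℕ, (∀ i ≤ k, i ∈ Agt) ∧
       ∃ l ∈ Agt, ∃ m ∈ Agt, ∃ n ∈ Agt, ∃ φ : Fml, χ = gpermFml k l m n φ}

/-- The definition schema `Def(□) : □φ ↔ [1][0]φ`. -/
def defBoxSet : Set Fml :=
  {χ | ∃ φ : Fml, χ = iffF (.box φ) (.cstit 1 (.cstit 0 φ))}

/-- The alternative axiomatics of Section 3: `S5(□)`, `S5(i)` for each agent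
`i ∈ Agt`, `(Incl_i)` and `(AAIA_k)`. -/
def xuAltAx (Agt : Set ℕ) : Set Fml :=
  s5Set Fml.box ∪ (⋃ i ∈ Agt, s5Set (fun φ => Fml.cstit i φ)) ∪
    inclSet Agt ∪ aaiaSet Agt

/-- The axiomatics of Section 4: `S5(i)` for each agent `i ∈ Agt`, `Def(□)`
and `(GPerm_k)`. -/
def gpermAx (Agt : Set ℕ) : Set Fml :=
  (⋃ i ∈ Agt, s5Set (fun φ => Fml.cstit i φ)) ∪ defBoxSet ∪ gpermSet Agt

/-- Hilbert-style provability from the axiom set `Ax` (together with all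
propositional tautologies) by modus ponens and `□`-necessitation. -/
inductive ProvB (Ax : Set Fml) : Fml → Prop
  | taut {φ : Fml} : Taut φ → ProvB Ax φ
  | axm {φ : Fml} : φ ∈ Ax → ProvB Ax φ
  | mp {φ ψ : Fml} : ProvB Ax (impF φ ψ) → ProvB Ax φ → ProvB Ax ψ
  | nec {φ : Fml} : ProvB Ax φ → ProvB Ax (.box φ)

/-- Hilbert-style provability from the axiom set `Ax` (together with all
propositional tautologies) by modus ponens and `[i]`-necessitation for each
agent `i ∈ Agt`. -/
inductive ProvC (Agt : Set ℕ) (Ax : Set Fml) : Fml → Prop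
  | taut {φ : Fml} : Taut φ → ProvC Agt Ax φ
  | axm {φ : Fml} : φ ∈ Ax → ProvC Agt Ax φ
  | mp {φ ψ : Fml} : ProvC Agt Ax (impF φ ψ) → ProvC Agt Ax φ → ProvC Agt Ax ψ
  | nec {i : ℕ} {φ : Fml} : i ∈ Agt → ProvC Agt Ax φ → ProvC Agt Ax (.cstit i φ)

/-- The biimplication `B_ψ` relating the fresh atom `p_ψ` (given by `pA ψ`)
with `ψ`, used in the translation `tr` from `L_DSTIT` to `L_CSTIT`:
`B_{[i dstit: φ]} = (p_{[i dstit: φ]} ↔ [i]p_φ ∧ ¬□p_φ)`. -/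
def Beq (pA : Fml → ℕ) : Fml → Fml
  | .atm q => iffF (.atm (pA (.atm q))) (.atm q)
  | .neg φ => iffF (.atm (pA (.neg φ))) (.neg (.atm (pA φ)))
  | .and φ ψ => iffF (.atm (pA (.and φ ψ))) (.and (.atm (pA φ)) (.atm (pA ψ)))
  | .cstit i φ => iffF (.atm (pA (.cstit i φ))) (.cstit i (.atm (pA φ)))
  | .dstit i φ => iffF (.atm (pA (.dstit i φ)))
      (.and (.cstit i (.atm (pA φ))) (.neg (.box (.atm (pA φ)))))
  | .box φ => iffF (.atm (pA (.box φ))) (.box (.atm (pA φ)))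

/-- The biimplication `B'_ψ` used in the translation `tr'` from `L_CSTIT` to
`L_DSTIT`: `B'_{[i]φ} = (p_{[i]φ} ↔ [i dstit: p_φ] ∨ □p_φ)`. -/
def Beq' (pA : Fml → ℕ) : Fml → Fml
  | .atm q => iffF (.atm (pA (.atm q))) (.atm q)
  | .neg φ => iffF (.atm (pA (.neg φ))) (.neg (.atm (pA φ)))
  | .and φ ψ => iffF (.atm (pA (.and φ ψ))) (.and (.atm (pA φ)) (.atm (pA ψ)))
  | .cstit i φ => iffF (.atm (pA (.cstit i φ)))
      (orF (.dstit i (.atm (pA φ))) (.box (.atm (pA φ))))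
  | .dstit i φ => iffF (.atm (pA (.dstit i φ))) (.dstit i (.atm (pA φ)))
  | .box φ => iffF (.atm (pA (.box φ))) (.box (.atm (pA φ)))

/-- The translation `tr(φ₀) = p_{φ₀} ∧ ⋀_{ψ ∈ sf(φ₀)} □B_ψ`. -/
noncomputable def tr (pA : Fml → ℕ) (φ0 : Fml) : Fml :=
  .and (.atm (pA φ0)) (conjF ((sf φ0).toList.map (fun ψ => .box (Beq pA ψ))))

/-- The translation `tr'(φ₀) = p_{φ₀} ∧ ⋀_{ψ ∈ sf(φ₀)} □B'_ψ`. -/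
noncomputable def tr' (pA : Fml → ℕ) (φ0 : Fml) : Fml :=
  .and (.atm (pA φ0)) (conjF ((sf φ0).toList.map (fun ψ => .box (Beq' pA ψ))))

/-- The atoms `p_ψ = pA ψ` for `ψ ∈ sf φ₀` are pairwise distinct and fresh
(none occurs in `φ₀`). -/
def Fresh (pA : Fml → ℕ) (φ0 : Fml) : Prop :=
  Set.InjOn pA ↑(sf φ0) ∧ ∀ ψ ∈ sf φ0, pA ψ ∉ atoms φ0

/-! Expand a model of `φ₀` by interpreting each fresh atom `p_ψ` as the formula `ψ`.
Injectivity of `ψ ↦ p_ψ` makes this well defined and freshness leaves the atoms of `φ₀`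
untouched, so every `B_ψ` holds at every index: its right-hand side is the semantic clause
of the main connective of `ψ`, applied to the atoms that now mean the immediate subformulas.
In particular `p_{φ₀} ∧ ⋀ □B_ψ` holds wherever `φ₀` did. -/

theorem mem_sf_self (φ : Fml) : φ ∈ sf φ := by
  cases φ <;> simp [sf]

theorem sf_subset_of_mem_sf {φ ψ : Fml} (h : ψ ∈ sf φ) : sf ψ ⊆ sf φ := by
  induction φ with
  | atm p => simp_all [sf]
  | neg φ ih | cstit _ φ ih | dstit _ φ ih | box φ ih =>
    simp only [sf, Finset.mem_insert] at h
    rcases h with rfl | h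
    · exact subset_rfl
    · exact (ih h).trans (Finset.subset_insert _ _)
  | and φ χ ih₁ ih₂ =>
    simp only [sf, Finset.mem_insert, Finset.mem_union] at h
    rcases h with rfl | h | h
    · exact subset_rfl
    · exact (ih₁ h).trans (Finset.subset_union_left.trans (Finset.subset_insert _ _))
    · exact (ih₂ h).trans (Finset.subset_union_right.trans (Finset.subset_insert _ _))

theorem atoms_subset_of_mem_sf {φ ψ : Fml} (h : ψ ∈ sf φ) : atoms ψ ⊆ atoms φ := by
  induction φ with
  | atm p => simp_all [sf]
  | neg φ ih | cstit _ φ ih | dstit _ φ ih | box φ ih =>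
    simp only [sf, Finset.mem_insert] at h
    rcases h with rfl | h
    · exact subset_rfl
    · exact ih h
  | and φ χ ih₁ ih₂ =>
    simp only [sf, Finset.mem_insert, Finset.mem_union] at h
    rcases h with rfl | h | h
    · exact subset_rfl
    · exact (ih₁ h).trans Finset.subset_union_left
    · exact (ih₂ h).trans Finset.subset_union_right

section Truth

variable {Agt : Set ℕ} (M : BTAC Agt)

theorem truth_iffF (φ ψ : Fml) (w : M.W) (h : Set M.W) :
    truth M (iffF φ ψ) w h ↔ (truth M φ w h ↔ truth M ψ w h) := by
  simp only [iffF, impF, truth]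
  tauto

theorem truth_conjF (L : List Fml) (w : M.W) (h : Set M.W) :
    truth M (conjF L) w h ↔ ∀ φ ∈ L, truth M φ w h := by
  induction L with
  | nil => simp [conjF, impF, truth]
  | cons φ L ih =>
    cases L with
    | nil => simp [conjF]
    | cons ψ L => simp only [conjF, truth, ih, List.forall_mem_cons]

def sfValuation (pA : Fml → ℕ) (φ0 : Fml) (q : ℕ) (w : M.W) (h : Set M.W) : Prop :=
  (∃ ψ ∈ sf φ0, pA ψ = q ∧ truth M ψ w h) ∨ ((∀ ψ ∈ sf φ0, pA ψ ≠ q) ∧ M.V q w h)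

-- An `abbrev`, so that `(M.expandSf pA φ0).W` is reducibly `M.W` for `simp` and `rw`.
abbrev BTAC.expandSf (pA : Fml → ℕ) (φ0 : Fml) : BTAC Agt :=
  { M with V := sfValuation M pA φ0 }

variable {M} {pA : Fml → ℕ} {φ0 : Fml}

theorem sfValuation_pA (hinj : Set.InjOn pA ↑(sf φ0)) {ψ : Fml} (hψ : ψ ∈ sf φ0)
    (w : M.W) (h : Set M.W) : sfValuation M pA φ0 (pA ψ) w h ↔ truth M ψ w h := by
  constructor
  · rintro (⟨ψ', hψ', heq, ht⟩ | ⟨hne, -⟩)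
    · rwa [hinj hψ' hψ heq] at ht
    · exact absurd rfl (hne ψ hψ)
  · exact fun ht => Or.inl ⟨ψ, hψ, rfl, ht⟩

theorem sfValuation_of_mem_atoms (hfresh : Fresh pA φ0) {q : ℕ} (hq : q ∈ atoms φ0)
    (w : M.W) (h : Set M.W) : sfValuation M pA φ0 q w h ↔ M.V q w h := by
  constructor
  · rintro (⟨ψ, hψ, rfl, -⟩ | ⟨-, hv⟩)
    · exact absurd hq (hfresh.2 ψ hψ)
    · exact hv
  · exact fun hv => Or.inr ⟨fun ψ hψ heq => hfresh.2 ψ hψ (heq ▸ hq), hv⟩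

theorem truth_expandSf_Beq (hfresh : Fresh pA φ0) {ψ : Fml} (hψ : ψ ∈ sf φ0)
    (w : M.W) (h : Set M.W) : truth (M.expandSf pA φ0) (Beq pA ψ) w h := by
  have hsub : sf ψ ⊆ sf φ0 := sf_subset_of_mem_sf hψ
  have hV : ∀ χ ∈ sf φ0, ∀ h', sfValuation M pA φ0 (pA χ) w h' ↔ truth M χ w h' :=
    fun χ hχ => sfValuation_pA hfresh.1 hχ w
  cases ψ with
  | atm q =>
    have hq : q ∈ atoms φ0 := atoms_subset_of_mem_sf hψ (by simp [atoms])
    simp only [Beq, truth_iffF, truth, hV _ hψ, sfValuation_of_mem_atoms hfresh hq]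
  | neg φ | cstit _ φ | dstit _ φ | box φ =>
    have hφ : φ ∈ sf φ0 := hsub (by simp [sf, mem_sf_self])
    simp [Beq, truth_iffF, truth, hV _ hψ, hV _ hφ]
  | and φ χ =>
    have hφ : φ ∈ sf φ0 := hsub (by simp [sf, mem_sf_self])
    have hχ : χ ∈ sf φ0 := hsub (by simp [sf, mem_sf_self])
    simp [Beq, truth_iffF, truth, hV _ hψ, hV _ hφ, hV _ hχ]

theorem truth_expandSf_tr (hfresh : Fresh pA φ0) (w : M.W) (h : Set M.W) :
    truth (M.expandSf pA φ0) (tr pA φ0) w h ↔ truth M φ0 w h := by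
  simp only [tr, truth, truth_conjF, List.forall_mem_map, sfValuation_pA hfresh.1 (mem_sf_self φ0)]
  exact and_iff_left fun ψ hψ h' _ _ => truth_expandSf_Beq hfresh (Finset.mem_toList.mp hψ) w h'

end Truth

theorem dstit_sat_implies_tr_sat_general (Agt : Set ℕ)
    (φ0 : Fml) (pA : Fml → ℕ) (hfresh : Fresh pA φ0)
    (hsat : satBTAC Agt φ0) :
    satBTAC Agt (tr pA φ0) := by
  obtain ⟨M, w, h, hmax, hw, hφ0⟩ := hsat
  exact ⟨M.expandSf pA φ0, w, h, hmax, hw, (truth_expandSf_tr hfresh w h).2 hφ0⟩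

/-- For every formula `φ₀` of `L_DSTIT`: if `φ₀` is satisfiable
in BT+AC structures, then the translation
`tr(φ₀) = p_{φ₀} ∧ ⋀_{ψ ∈ sf(φ₀)} □B_ψ`, a formula of `L_CSTIT`, is
satisfiable in BT+AC structures. -/
theorem dstit_sat_implies_tr_sat (Agt : Set ℕ) (hAgt : InitSeg Agt)
    (φ0 : Fml) (hφ0 : NoCstit φ0) (hφ0A : AgentsIn Agt φ0)
    (pA : Fml → ℕ) (hfresh : Fresh pA φ0)
    (hsat : satBTAC Agt φ0) :
    satBTAC Agt (tr pA φ0) :=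
  dstit_sat_implies_tr_sat_general Agt φ0 pA hfresh hsat

end STIT
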